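/- arXiv:2204.08733 — 7 statements merged into one kernel-verified Lean document; each statement's English description precedes it below -/
import Mathlib

section
/- Under Assumption 1 (f is lower semicontinuous on X × Δ and X is compact) and Assumption 2 (there exists x ∈ X with f(x,δ) ≤ 0 for all δ ∈ Δ), for every N ≥ 1 the scenario value function ω ↦ g_N(ω) is lower semicontinuous on Δ^N (equipped with the product topology). -/
/-!
The sublevel set `K = {x ∈ X | L x ≤ z}` of the objective, for `z` just below the value at `ω`, is
compact and contains no point feasible for `ω`. Lower semicontinuity of `f` says that infeasibility
is an open condition on `(ω, x)`, so by the tube lemma over the compact `K` every `ω'` close to `ω`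
still has no feasible point in `K`; as the feasible set of `ω'` is nonempty, its value is `≥ z`.
-/

open MeasureTheory Set

/-- Scenario optimal value `g_N(ω) = inf { c·x : x ∈ X, f(x, δ_i) ≤ 0, i = 1,…,N }`. -/
noncomputable def scenVal {d m N : ℕ} (X : Set (EuclideanSpace ℝ (Fin d)))
    (c : EuclideanSpace ℝ (Fin d))
    (f : EuclideanSpace ℝ (Fin d) → EuclideanSpace ℝ (Fin m) → ℝ)
    (ω : Fin N → EuclideanSpace ℝ (Fin m)) : ℝ :=
  sInf ((fun x => ∑ i, c i * x i) '' {x ∈ X | ∀ i, f x (ω i) ≤ 0})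

open Filter Topology

theorem IsCompact.lowerSemicontinuousOn_sInf_image_sep {α β : Type*} [TopologicalSpace α]
    [TopologicalSpace β] {X : Set β} (hX : IsCompact X) {L : β → ℝ} (hL : Continuous L)
    {s : Set α} {P : α → β → Prop} (hne : ∀ a ∈ s, ∃ x ∈ X, P a x)
    (hP : ∀ a ∈ s, ∀ x ∈ X, ¬P a x → ∀ᶠ p in 𝓝[s ×ˢ X] (a, x), ¬P p.1 p.2) :
    LowerSemicontinuousOn (fun a => sInf (L '' {x ∈ X | P a x})) s := by
  intro a ha y hy
  obtain ⟨z, hyz, hz⟩ := exists_between hy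
  set K := X ∩ L ⁻¹' Iic z
  have hK : IsCompact K := hX.inter_right (isClosed_Iic.preimage hL)
  have hK_infeasible : ∀ x ∈ K, ¬P a x := fun x hx hPx =>
    hz.not_ge <| (csInf_le ((hX.image hL).bddBelow.mono (image_mono (sep_subset _ _)))
      ⟨x, ⟨hx.1, hPx⟩, rfl⟩).trans hx.2
  have hnhds : ∀ x ∈ K, ∀ᶠ p in 𝓝[s] a ×ˢ 𝓝 x, p.2 ∈ X → ¬P p.1 p.2 := by
    intro x hx
    have hprod : 𝓝[s ×ˢ X] (a, x) = 𝓝[s] a ×ˢ 𝓝 x ⊓ 𝓟 (univ ×ˢ X) := by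
      rw [← nhdsWithin_univ x, ← nhdsWithin_prod_eq, nhdsWithin, nhdsWithin, inf_assoc,
        inf_principal, prod_inter_prod, inter_univ, univ_inter]
    have := hP a ha x hx.1 (hK_infeasible x hx)
    rw [hprod, eventually_inf_principal] at this
    exact this.mono fun p hp hpX => hp ⟨mem_univ _, hpX⟩
  have hnhdsSet : ∀ᶠ p in 𝓝[s] a ×ˢ 𝓝ˢ K, p.2 ∈ X → ¬P p.1 p.2 :=
    hK.mem_prod_nhdsSet_of_forall hnhds
  have htube : ∀ᶠ a' in 𝓝[s] a, ∀ x ∈ K, x ∈ X → ¬P a' x :=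
    hnhdsSet.curry.mono fun _ h => h.self_of_nhdsSet
  filter_upwards [htube, self_mem_nhdsWithin] with a' ha'K ha'
  obtain ⟨x₀, hx₀X, hx₀⟩ := hne a' ha'
  refine hyz.trans_le (le_csInf ⟨L x₀, x₀, ⟨hx₀X, hx₀⟩, rfl⟩ ?_)
  rintro _ ⟨x, ⟨hxX, hPx⟩, rfl⟩
  by_contra! hxz
  exact ha'K x ⟨hxX, hxz.le⟩ hxX hPx

theorem LowerSemicontinuousOn.eventually_not_forall_nonpos {ι β γ : Type*}
    [TopologicalSpace β] [TopologicalSpace γ] {X : Set β} {Δ : Set γ} {f : β → γ → ℝ}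
    (hf : LowerSemicontinuousOn (Function.uncurry f) (X ×ˢ Δ)) {ω : ι → γ}
    (hω : ∀ i, ω i ∈ Δ) {x : β} (hx : x ∈ X) (hinf : ¬∀ i, f x (ω i) ≤ 0) :
    ∀ᶠ p in 𝓝[{ω' | ∀ i, ω' i ∈ Δ} ×ˢ X] (ω, x), ¬∀ i, f p.2 (p.1 i) ≤ 0 := by
  simp only [not_forall, not_le] at hinf
  obtain ⟨j, hj⟩ := hinf
  have hpos := hf (x, ω j) ⟨hx, hω j⟩ 0 hj
  have hcont : Continuous fun p : (ι → γ) × β => (p.2, p.1 j) := by fun_prop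
  have htendsto : Tendsto (fun p : (ι → γ) × β => (p.2, p.1 j))
      (𝓝[{ω' | ∀ i, ω' i ∈ Δ} ×ˢ X] (ω, x)) (𝓝[X ×ˢ Δ] (x, ω j)) :=
    hcont.continuousWithinAt.tendsto_nhdsWithin fun p hp => ⟨hp.2, hp.1 j⟩
  exact (htendsto.eventually hpos).mono fun p hp hfeas => hp.not_ge (hfeas j)

theorem stmt_0_general {d m : ℕ}
    (X : Set (EuclideanSpace ℝ (Fin d))) (c : EuclideanSpace ℝ (Fin d))
    (Δ : Set (EuclideanSpace ℝ (Fin m)))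
    (f : EuclideanSpace ℝ (Fin d) → EuclideanSpace ℝ (Fin m) → ℝ)
    -- Assumption 1
    (hlsc : LowerSemicontinuousOn (Function.uncurry f) (X ×ˢ Δ))
    (hXcomp : IsCompact X)
    -- Assumption 2
    (hfeas : ∃ x ∈ X, ∀ δ ∈ Δ, f x δ ≤ 0)
    (N : ℕ) :
    LowerSemicontinuousOn (fun ω : Fin N → EuclideanSpace ℝ (Fin m) => scenVal X c f ω)
      {ω : Fin N → EuclideanSpace ℝ (Fin m) | ∀ i, ω i ∈ Δ} := by
  obtain ⟨x₀, hx₀X, hx₀⟩ := hfeas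
  have hcost : Continuous fun x : EuclideanSpace ℝ (Fin d) => ∑ i, c i * x i := by fun_prop
  exact hXcomp.lowerSemicontinuousOn_sInf_image_sep hcost
    (fun ω hω => ⟨x₀, hx₀X, fun i => hx₀ _ (hω i)⟩)
    (fun ω hω x hx => hlsc.eventually_not_forall_nonpos hω hx)

/-- Under Assumption 1 (f l.s.c. on X × Δ, X compact) and Assumption 2 (robust feasibility),
for every N ≥ 1 the scenario value function ω ↦ g_N(ω) is lower semicontinuous on Δ^N. -/
theorem stmt_0 {d m : ℕ}
    (X : Set (EuclideanSpace ℝ (Fin d))) (c : EuclideanSpace ℝ (Fin d))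
    (Δ : Set (EuclideanSpace ℝ (Fin m))) (hΔne : Δ.Nonempty)
    (f : EuclideanSpace ℝ (Fin d) → EuclideanSpace ℝ (Fin m) → ℝ)
    -- Assumption 1
    (hlsc : LowerSemicontinuousOn (Function.uncurry f) (X ×ˢ Δ))
    (hXcomp : IsCompact X)
    -- Assumption 2
    (hfeas : ∃ x ∈ X, ∀ δ ∈ Δ, f x δ ≤ 0)
    (N : ℕ) (hN : 1 ≤ N) :
    LowerSemicontinuousOn (fun ω : Fin N → EuclideanSpace ℝ (Fin m) => scenVal X c f ω)
      {ω : Fin N → EuclideanSpace ℝ (Fin m) | ∀ i, ω i ∈ Δ} :=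
  stmt_0_general X c Δ f hlsc hXcomp hfeas N
end

section
/- Under Assumptions 1–3, for every N ≥ d (with d ≥ 1) one has sup_{ω ∈ Δ^N} g_N(ω) = J*. In particular, the complexity of the robust convex program, i.e., the smallest k with sup_{ω ∈ Δ^k} g_k(ω) = J*, is at most d. -/
open MeasureTheory Set

/-- Robust optimal value `J* = inf { c·x : x ∈ X, f(x,δ) ≤ 0 for all δ ∈ Δ }`. -/
noncomputable def robustVal {d m : ℕ} (X : Set (EuclideanSpace ℝ (Fin d)))
    (c : EuclideanSpace ℝ (Fin d))
    (f : EuclideanSpace ℝ (Fin d) → EuclideanSpace ℝ (Fin m) → ℝ)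
    (Δ : Set (EuclideanSpace ℝ (Fin m))) : ℝ :=
  sInf ((fun x => ∑ i, c i * x i) '' {x ∈ X | ∀ δ ∈ Δ, f x δ ≤ 0})

/-- `g_N^* = sup_{ω ∈ Δ^N} g_N(ω)`. -/
noncomputable def scenSup {d m : ℕ} (X : Set (EuclideanSpace ℝ (Fin d)))
    (c : EuclideanSpace ℝ (Fin d))
    (f : EuclideanSpace ℝ (Fin d) → EuclideanSpace ℝ (Fin m) → ℝ)
    (Δ : Set (EuclideanSpace ℝ (Fin m))) (N : ℕ) : ℝ :=
  sSup {r : ℝ | ∃ ω : Fin N → EuclideanSpace ℝ (Fin m),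
    (∀ i, ω i ∈ Δ) ∧ scenVal X c f ω = r}

/-!
If `J*` were not attained in the limit by `d` scenarios, then for some `w < J*` the compact
convex sets `{x ∈ X | c·x ≤ w}` and `{x ∈ X | f(x, δ) ≤ 0}`, `δ ∈ Δ`, have empty intersection.
By Helly's theorem some `d + 1` of them already have empty intersection; since the constraint
sets alone share a robustly feasible point, the half-space is among these, so `d` scenarios
push the scenario value above `w`.
-/

open Finset in
theorem Convex.exists_finset_card_le_finrank_inter_biInter_eq_empty {ι 𝕜 E : Type*} [Field 𝕜]
    [LinearOrder 𝕜] [IsStrictOrderedRing 𝕜] [AddCommGroup E] [Module 𝕜 E]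
    [FiniteDimensional 𝕜 E] [TopologicalSpace E] [T2Space E] {K : Set E} {F : ι → Set E}
    (hKconv : Convex 𝕜 K) (hKcomp : IsCompact K) (hFconv : ∀ i, Convex 𝕜 (F i))
    (hFcomp : ∀ i, IsCompact (F i)) (hF : (⋂ i, F i).Nonempty) (hKF : K ∩ ⋂ i, F i = ∅) :
    ∃ s : Finset ι, #s ≤ Module.finrank 𝕜 E ∧ K ∩ ⋂ i ∈ s, F i = ∅ := by
  by_contra! h
  let G : Option ι → Set E := fun o => o.elim K F
  have hG : (⋂ o, G o).Nonempty := by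
    refine Convex.helly_theorem_compact' (𝕜 := 𝕜) (by rintro (_ | i) <;> simp [G, *])
      (by rintro (_ | i) <;> simp [G, *]) fun I hI => ?_
    by_cases hnone : none ∈ I
    · have hcard : #I.eraseNone ≤ Module.finrank 𝕜 E := by
        rw [card_eraseNone_of_mem hnone]; omega
      refine (h _ hcard).mono fun x hx => mem_iInter₂.2 ?_
      rintro (_ | i) hi
      · exact hx.1
      · exact mem_iInter₂.1 hx.2 i (mem_eraseNone.2 hi)
    · refine hF.mono fun x hx => mem_iInter₂.2 ?_
      rintro (_ | i) hi
      · exact absurd hi hnone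
      · exact mem_iInter.1 hx i
  rw [iInter_option] at hG
  exact hG.ne_empty hKF

theorem Finset.exists_fin_subset_range {α : Type*} [Nonempty α] (s : Finset α) {N : ℕ}
    (hN : s.card ≤ N) : ∃ ω : Fin N → α, (s : Set α) ⊆ Set.range ω := by
  classical
  refine ⟨fun i => if h : (i : ℕ) < s.card then s.equivFin.symm ⟨i, h⟩ else Classical.arbitrary α,
    fun a ha => ⟨⟨s.equivFin ⟨a, ha⟩, (s.equivFin ⟨a, ha⟩).2.trans_le hN⟩, ?_⟩⟩
  simp

theorem LowerSemicontinuousOn.uncurry_right {α β γ : Type*} [TopologicalSpace α]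
    [TopologicalSpace β] [Preorder γ] {f : α → β → γ} {sα : Set α} {sβ : Set β} (b : β)
    (hb : b ∈ sβ) (h : LowerSemicontinuousOn (Function.uncurry f) (sα ×ˢ sβ)) :
    LowerSemicontinuousOn (fun a => f a b) sα :=
  h.comp (Continuous.prodMk_left b).continuousOn fun _ ha => ⟨ha, hb⟩

section RobustProgram

variable {d m : ℕ} {X : Set (EuclideanSpace ℝ (Fin d))} {c : EuclideanSpace ℝ (Fin d)}
  {f : EuclideanSpace ℝ (Fin d) → EuclideanSpace ℝ (Fin m) → ℝ}
  {Δ : Set (EuclideanSpace ℝ (Fin m))}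

theorem isLinearMap_sum_mul (c : EuclideanSpace ℝ (Fin d)) :
    IsLinearMap ℝ fun x : EuclideanSpace ℝ (Fin d) => ∑ i, c i * x i := by
  constructor <;> intros <;>
    simp [mul_add, Finset.sum_add_distrib, Finset.mul_sum, mul_left_comm]

theorem IsCompact.bddBelow_image_sum_mul (hXcomp : IsCompact X)
    {S : Set (EuclideanSpace ℝ (Fin d))} (hS : S ⊆ X) :
    BddBelow ((fun x => ∑ i, c i * x i) '' S) :=
  (hXcomp.image (by fun_prop)).bddBelow.mono (image_mono hS)

theorem scenVal_le_robustVal (hXcomp : IsCompact X) (hfeas : ∃ x ∈ X, ∀ δ ∈ Δ, f x δ ≤ 0)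
    {N : ℕ} {ω : Fin N → EuclideanSpace ℝ (Fin m)} (hω : ∀ i, ω i ∈ Δ) :
    scenVal X c f ω ≤ robustVal X c f Δ :=
  csInf_le_csInf (hXcomp.bddBelow_image_sum_mul fun _ hx => hx.1) (Nonempty.image _ hfeas)
    (image_mono fun _ hx => ⟨hx.1, fun i => hx.2 (ω i) (hω i)⟩)

theorem exists_le_scenVal_of_lt_robustVal (hΔne : Δ.Nonempty)
    (hlsc : LowerSemicontinuousOn (Function.uncurry f) (X ×ˢ Δ)) (hXcomp : IsCompact X)
    (hfeas : ∃ x ∈ X, ∀ δ ∈ Δ, f x δ ≤ 0) (hXconv : Convex ℝ X)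
    (hconv : ∀ δ ∈ Δ, ConvexOn ℝ X fun x => f x δ) {N : ℕ} (hN : d ≤ N) {w : ℝ}
    (hw : w < robustVal X c f Δ) :
    ∃ ω : Fin N → EuclideanSpace ℝ (Fin m), (∀ i, ω i ∈ Δ) ∧ w ≤ scenVal X c f ω := by
  obtain ⟨x₀, hx₀X, hx₀⟩ := hfeas
  set L : EuclideanSpace ℝ (Fin d) → ℝ := fun x => ∑ i, c i * x i
  let K := X ∩ L ⁻¹' Iic w
  let F : ↥Δ → Set (EuclideanSpace ℝ (Fin d)) := fun δ => X ∩ (fun x => f x δ) ⁻¹' Iic 0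
  have hKF : K ∩ ⋂ δ, F δ = ∅ := by
    refine eq_empty_of_forall_notMem fun x ⟨⟨hxX, hxw⟩, hxF⟩ => hw.not_ge ?_
    have hx : x ∈ {x ∈ X | ∀ δ ∈ Δ, f x δ ≤ 0} :=
      ⟨hxX, fun δ hδ => (mem_iInter.1 hxF ⟨δ, hδ⟩).2⟩
    exact (csInf_le (hXcomp.bddBelow_image_sum_mul fun _ hy => hy.1)
      (mem_image_of_mem L hx)).trans hxw
  obtain ⟨s, hs, hsK⟩ :=
    Convex.exists_finset_card_le_finrank_inter_biInter_eq_empty (K := K) (F := F)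
    (hXconv.inter (convex_halfSpace_le (isLinearMap_sum_mul c) w))
    (hXcomp.inter_right (isClosed_Iic.preimage (by fun_prop)))
    (fun δ : Δ => (hconv δ δ.2).convex_le 0)
    (fun δ : Δ => (hlsc.uncurry_right (↑δ) δ.2).isCompact_inter_preimage_Iic hXcomp 0)
    ⟨x₀, mem_iInter.2 fun δ : Δ => ⟨hx₀X, hx₀ δ δ.2⟩⟩ hKF
  have : Nonempty ↥Δ := hΔne.to_subtype
  obtain ⟨ω, hω⟩ := s.exists_fin_subset_range
    (hs.trans ((finrank_euclideanSpace_fin (𝕜 := ℝ)).trans_le hN))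
  refine ⟨fun i => ω i, fun i => (ω i).2, le_csInf ⟨_, mem_image_of_mem L
    ⟨hx₀X, fun i => hx₀ _ (ω i).2⟩⟩ ?_⟩
  rintro _ ⟨x, ⟨hxX, hxω⟩, rfl⟩
  by_contra! hxw
  refine hsK.subset ⟨⟨hxX, hxw.le⟩, mem_iInter₂.2 fun δ hδ => ?_⟩
  obtain ⟨i, rfl⟩ := hω hδ
  exact ⟨hxX, hxω i⟩

theorem scenSup_eq_robustVal (hΔne : Δ.Nonempty)
    (hlsc : LowerSemicontinuousOn (Function.uncurry f) (X ×ˢ Δ)) (hXcomp : IsCompact X)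
    (hfeas : ∃ x ∈ X, ∀ δ ∈ Δ, f x δ ≤ 0) (hXconv : Convex ℝ X)
    (hconv : ∀ δ ∈ Δ, ConvexOn ℝ X fun x => f x δ) {N : ℕ} (hN : d ≤ N) :
    scenSup X c f Δ N = robustVal X c f Δ := by
  obtain ⟨δ₀, hδ₀⟩ := hΔne
  refine csSup_eq_of_forall_le_of_forall_lt_exists_gt ⟨_, fun _ => δ₀, fun _ => hδ₀, rfl⟩
    (fun _ ⟨ω, hω, hr⟩ => hr ▸ scenVal_le_robustVal hXcomp hfeas hω) fun w hw => ?_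
  obtain ⟨w', hww', hw'⟩ := exists_between hw
  obtain ⟨ω, hω, hw'ω⟩ := exists_le_scenVal_of_lt_robustVal ⟨δ₀, hδ₀⟩ hlsc hXcomp hfeas hXconv
    hconv hN hw'
  exact ⟨_, ⟨ω, hω, rfl⟩, hww'.trans_le hw'ω⟩

end RobustProgram

theorem stmt_3_general {d m : ℕ}
    (X : Set (EuclideanSpace ℝ (Fin d))) (c : EuclideanSpace ℝ (Fin d))
    (Δ : Set (EuclideanSpace ℝ (Fin m))) (hΔne : Δ.Nonempty)
    (f : EuclideanSpace ℝ (Fin d) → EuclideanSpace ℝ (Fin m) → ℝ)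
    -- Assumption 1
    (hlsc : LowerSemicontinuousOn (Function.uncurry f) (X ×ˢ Δ))
    (hXcomp : IsCompact X)
    -- Assumption 2
    (hfeas : ∃ x ∈ X, ∀ δ ∈ Δ, f x δ ≤ 0)
    -- Assumption 3
    (hXconv : Convex ℝ X)
    (hconv : ∀ δ ∈ Δ, ConvexOn ℝ X fun x => f x δ) :
    (∀ N : ℕ, d ≤ N → scenSup X c f Δ N = robustVal X c f Δ) ∧
      sInf {k : ℕ | scenSup X c f Δ k = robustVal X c f Δ} ≤ d :=
  have hsup : ∀ N : ℕ, d ≤ N → scenSup X c f Δ N = robustVal X c f Δ := fun _ hN =>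
    scenSup_eq_robustVal hΔne hlsc hXcomp hfeas hXconv hconv hN
  ⟨hsup, Nat.sInf_le (hsup d le_rfl)⟩

/-- Under Assumptions 1–3, for every N ≥ d (d ≥ 1) one has sup_{ω ∈ Δ^N} g_N(ω) = J*;
in particular the complexity of the robust program (smallest k with
sup_{ω ∈ Δ^k} g_k(ω) = J*) is at most d. -/
theorem stmt_3 {d m : ℕ} (hd : 1 ≤ d)
    (X : Set (EuclideanSpace ℝ (Fin d))) (c : EuclideanSpace ℝ (Fin d))
    (Δ : Set (EuclideanSpace ℝ (Fin m))) (hΔne : Δ.Nonempty)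
    (f : EuclideanSpace ℝ (Fin d) → EuclideanSpace ℝ (Fin m) → ℝ)
    -- Assumption 1
    (hlsc : LowerSemicontinuousOn (Function.uncurry f) (X ×ˢ Δ))
    (hXcomp : IsCompact X)
    -- Assumption 2
    (hfeas : ∃ x ∈ X, ∀ δ ∈ Δ, f x δ ≤ 0)
    -- Assumption 3
    (hXconv : Convex ℝ X)
    (hconv : ∀ δ ∈ Δ, ConvexOn ℝ X fun x => f x δ) :
    (∀ N : ℕ, d ≤ N → scenSup X c f Δ N = robustVal X c f Δ) ∧
      sInf {k : ℕ | scenSup X c f Δ k = robustVal X c f Δ} ≤ d :=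
  stmt_3_general X c Δ hΔne f hlsc hXcomp hfeas hXconv hconv
end

section
/- Under Assumptions 1–3, for every N ≥ d (with d ≥ 1) the tail probability function p_N : [0,∞) → [0,1] is monotonically nondecreasing and upper semicontinuous at every α ∈ [0,∞). -/
/-!
The scenario value `g_N` minimizes a continuous objective over the points of the compact set `X`
satisfying finitely many lower semicontinuous constraints. If `g_N ≤ t` along scenarios tending to
`ω`, then near-optimal feasible points have a limit in `X` (compactness), which is feasible for `ω`
(lower semicontinuity of `f`), so `g_N(ω) ≤ t`: thus `g_N` is lower semicontinuous on `Δ^N`.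
Hence the events `{J* - α ≤ g_N}` are measurable, grow with `α`, and the event at `α` is the
intersection of those at `α' > α`; continuity from above of the finite measure `ℙ^N` makes `p_N`
right continuous, and a nondecreasing right-continuous function is upper semicontinuous.
-/

open MeasureTheory Set

/-- Tail probability `p_N(α) = ℙ^N { ω ∈ Δ^N : J* − α ≤ g_N(ω) }`. -/
noncomputable def tailProb {d m : ℕ} (X : Set (EuclideanSpace ℝ (Fin d)))
    (c : EuclideanSpace ℝ (Fin d))
    (f : EuclideanSpace ℝ (Fin d) → EuclideanSpace ℝ (Fin m) → ℝ)
    (Δ : Set (EuclideanSpace ℝ (Fin m)))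
    (ℙ : Measure (EuclideanSpace ℝ (Fin m))) (N : ℕ) (α : ℝ) : ENNReal :=
  (Measure.pi fun _ : Fin N => ℙ)
    {ω : Fin N → EuclideanSpace ℝ (Fin m) |
      (∀ i, ω i ∈ Δ) ∧ robustVal X c f Δ - α ≤ scenVal X c f ω}

open Filter Topology

theorem LowerSemicontinuousOn.measurableSet_sep_le {β γ : Type*} [TopologicalSpace β]
    [MeasurableSpace β] [OpensMeasurableSpace β] [TopologicalSpace γ] [LinearOrder γ]
    [OrderTopology γ] [SecondCountableTopology γ] [MeasurableSpace γ] [BorelSpace γ]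
    {g : β → γ} {S : Set β} (hg : LowerSemicontinuousOn g S) (hS : MeasurableSet S) (t : γ) :
    MeasurableSet {x ∈ S | t ≤ g x} := by
  have hmeas : Measurable (S.domRestrict g) := (lowerSemicontinuous_restrict_iff.mpr hg).measurable
  convert hS.subtype_image ((measurableSet_Ici (a := t)).preimage hmeas) using 1
  ext x
  simp [Set.domRestrict, and_comm]

theorem LowerSemicontinuousWithinAt.le_of_tendsto {β γ ι : Type*} [TopologicalSpace β]
    [LinearOrder γ] {φ : β → γ} {s : Set β} {p : β} (hφ : LowerSemicontinuousWithinAt φ s p)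
    {l : Filter ι} [l.NeBot] {u : ι → β} (hu : Tendsto u l (𝓝[s] p)) {y : γ}
    (hy : ∀ᶠ k in l, φ (u k) ≤ y) : φ p ≤ y := by
  by_contra! h
  obtain ⟨k, hgt, hle⟩ := ((hu.eventually (hφ y h)).and hy).exists
  exact (hgt.trans_le hle).false

section Feasibility

variable {α β ι : Type*} [TopologicalSpace α] [TopologicalSpace β] {L : α → ℝ} {X : Set α}
  {Δ : Set β} {F : α → β → ℝ}

theorem exists_feasible_le_of_frequently (hL : Continuous L) (hX : IsCompact X)
    (hF : LowerSemicontinuousOn (Function.uncurry F) (X ×ˢ Δ)) {ω : ι → β}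
    (hω : ∀ i, ω i ∈ Δ) {t : ℝ}
    (h : ∃ᶠ ω' in 𝓝[{ω' | ∀ i, ω' i ∈ Δ}] ω, ∃ x ∈ X, (∀ i, F x (ω' i) ≤ 0) ∧ L x ≤ t) :
    ∃ a ∈ X, (∀ i, F a (ω i) ≤ 0) ∧ L a ≤ t := by
  set S : Set (ι → β) := {ω' | ∀ i, ω' i ∈ Δ}
  let P : (ι → β) → Prop := fun ω' => ω' ∈ S ∧ ∃ x ∈ X, (∀ i, F x (ω' i) ≤ 0) ∧ L x ≤ t
  have hP : ∃ᶠ ω' in 𝓝[S] ω, P ω' := (h.and_eventually self_mem_nhdsWithin).mono fun _ h => ⟨h.2, h.1⟩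
  obtain ⟨-, -, x₀, -⟩ := hP.exists
  have : Nonempty α := ⟨x₀⟩
  have hwitness : ∀ ω', P ω' → ∃ x ∈ X, (∀ i, F x (ω' i) ≤ 0) ∧ L x ≤ t := fun _ h => h.2
  choose! x hxX hxF hxL using hwitness
  have := frequently_iff_neBot.mp hP
  set U := Ultrafilter.of (𝓝[S] ω ⊓ 𝓟 {ω' | P ω'})
  have hUω : Tendsto id U (𝓝 ω) :=
    (Ultrafilter.of_le _).trans (inf_le_left.trans nhdsWithin_le_nhds)
  have hUP : ∀ᶠ ω' in (U : Filter (ι → β)), P ω' :=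
    (Ultrafilter.of_le _).trans inf_le_right (mem_principal_self _)
  obtain ⟨a, haX, hxa⟩ := hX.ultrafilter_le_nhds (U.map x)
    (le_principal_iff.mpr (hUP.mono fun ω' h => hxX ω' h))
  have hxa : Tendsto x U (𝓝 a) := hxa
  refine ⟨a, haX, fun i => ?_, le_of_tendsto ((hL.tendsto a).comp hxa) (hUP.mono hxL)⟩
  have hpair : Tendsto (fun ω' => (x ω', ω' i)) U (𝓝[X ×ˢ Δ] (a, ω i)) :=
    tendsto_nhdsWithin_iff.mpr ⟨hxa.prodMk_nhds (((continuous_apply i).tendsto ω).comp hUω),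
      hUP.mono fun ω' h => ⟨hxX ω' h, h.1 i⟩⟩
  exact LowerSemicontinuousWithinAt.le_of_tendsto (hF (a, ω i) ⟨haX, hω i⟩) hpair
    (hUP.mono fun ω' h => hxF ω' h i)

theorem lowerSemicontinuousOn_sInf_image_feasible (hL : Continuous L) (hX : IsCompact X)
    (hF : LowerSemicontinuousOn (Function.uncurry F) (X ×ˢ Δ))
    (hfeas : ∃ x ∈ X, ∀ δ ∈ Δ, F x δ ≤ 0) :
    LowerSemicontinuousOn (fun ω : ι → β => sInf (L '' {x ∈ X | ∀ i, F x (ω i) ≤ 0}))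
      {ω | ∀ i, ω i ∈ Δ} := by
  intro ω hω t ht
  obtain ⟨t', htt', ht'⟩ := exists_between ht
  obtain ⟨x₀, hx₀X, hx₀F⟩ := hfeas
  by_contra hnot
  have hfreq : ∃ᶠ ω' in 𝓝[{ω' | ∀ i, ω' i ∈ Δ}] ω,
      ∃ x ∈ X, (∀ i, F x (ω' i) ≤ 0) ∧ L x ≤ t' := by
    refine ((not_eventually.mp hnot).and_eventually self_mem_nhdsWithin).mono ?_
    rintro ω' ⟨hle, hω'⟩
    have hval : sInf (L '' {x ∈ X | ∀ i, F x (ω' i) ≤ 0}) < t' := (not_lt.mp hle).trans_lt htt'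
    have hne : (L '' {x ∈ X | ∀ i, F x (ω' i) ≤ 0}).Nonempty :=
      ⟨L x₀, x₀, ⟨hx₀X, fun i => hx₀F _ (hω' i)⟩, rfl⟩
    obtain ⟨_, ⟨x, hx, rfl⟩, hlt⟩ := exists_lt_of_csInf_lt hne hval
    exact ⟨x, hx.1, hx.2, hlt.le⟩
  obtain ⟨a, haX, haF, hLa⟩ := exists_feasible_le_of_frequently hL hX hF hω hfreq
  have hval : sInf (L '' {x ∈ X | ∀ i, F x (ω i) ≤ 0}) ≤ L a :=
    csInf_le ((hX.image hL).bddBelow.mono (image_mono (sep_subset _ _))) ⟨a, ⟨haX, haF⟩, rfl⟩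
  exact (hval.trans hLa).not_gt ht'

end Feasibility

theorem monotone_measure_sep_le {Ω : Type*} [MeasurableSpace Ω] (μ : Measure Ω) {S : Set Ω}
    {φ : Ω → ℝ} : Monotone fun r => μ {ω ∈ S | φ ω ≤ r} :=
  fun _ _ h => measure_mono fun _ hω => ⟨hω.1, hω.2.trans h⟩

theorem upperSemicontinuous_measure_sep_le {Ω : Type*} [MeasurableSpace Ω] (μ : Measure Ω)
    [IsFiniteMeasure μ] {S : Set Ω} {φ : Ω → ℝ} (hφ : ∀ r, MeasurableSet {ω ∈ S | φ ω ≤ r}) :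
    UpperSemicontinuous fun r => μ {ω ∈ S | φ ω ≤ r} := by
  intro a y hy
  have hinter : ⋂ r > a, {ω ∈ S | φ ω ≤ r} = {ω ∈ S | φ ω ≤ a} := by
    ext ω
    simp only [mem_iInter, mem_ofPred_eq]
    exact ⟨fun h => ⟨(h (a + 1) (lt_add_one a)).1,
      le_of_forall_gt_imp_ge_of_dense fun r hr => (h r hr).2⟩,
      fun h r hr => ⟨h.1, h.2.trans hr.le⟩⟩
  have hright : Tendsto (fun r => μ {ω ∈ S | φ ω ≤ r}) (𝓝[>] a) (𝓝 (μ {ω ∈ S | φ ω ≤ a})) := by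
    rw [← hinter]
    exact tendsto_measure_biInter_gt (fun r _ => (hφ r).nullMeasurableSet)
      (fun _ _ _ hij _ hω => ⟨hω.1, hω.2.trans hij⟩) ⟨a + 1, lt_add_one a, measure_ne_top _ _⟩
  have hleft : ∀ᶠ r in 𝓝[≤] a, μ {ω ∈ S | φ ω ≤ r} < y :=
    eventually_nhdsWithin_of_forall fun _ hr => (monotone_measure_sep_le μ hr).trans_lt hy
  rw [← nhdsLE_sup_nhdsGT a]
  exact eventually_sup.mpr ⟨hleft, hright.eventually (eventually_lt_nhds hy)⟩

theorem stmt_5_general {d m : ℕ}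
    (X : Set (EuclideanSpace ℝ (Fin d))) (c : EuclideanSpace ℝ (Fin d))
    (Δ : Set (EuclideanSpace ℝ (Fin m)))
    (f : EuclideanSpace ℝ (Fin d) → EuclideanSpace ℝ (Fin m) → ℝ)
    -- Assumption 1
    (hlsc : LowerSemicontinuousOn (Function.uncurry f) (X ×ˢ Δ))
    (hXcomp : IsCompact X)
    -- Assumption 2
    (hfeas : ∃ x ∈ X, ∀ δ ∈ Δ, f x δ ≤ 0)
    -- probability measure supported on Δ
    (ℙ : Measure (EuclideanSpace ℝ (Fin m))) [IsProbabilityMeasure ℙ]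
    (hΔmeas : MeasurableSet Δ)
    (N : ℕ) :
    MonotoneOn (tailProb X c f Δ ℙ N) (Set.Ici 0) ∧
      UpperSemicontinuousOn (tailProb X c f Δ ℙ N) (Set.Ici 0) := by
  set S : Set (Fin N → EuclideanSpace ℝ (Fin m)) := {ω | ∀ i, ω i ∈ Δ}
  have hS : MeasurableSet S := by
    convert MeasurableSet.univ_pi fun _ : Fin N => hΔmeas
    ext
    simp [S]
  have hg : LowerSemicontinuousOn (scenVal X c f) S :=
    lowerSemicontinuousOn_sInf_image_feasible (by fun_prop) hXcomp hlsc hfeas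
  have htail : tailProb X c f Δ ℙ N = fun α => (Measure.pi fun _ => ℙ)
      {ω ∈ S | robustVal X c f Δ - scenVal X c f ω ≤ α} := by
    ext α
    unfold tailProb
    congr 1
    ext ω
    exact and_congr_right fun _ => sub_le_comm
  have hmeas : ∀ α, MeasurableSet {ω ∈ S | robustVal X c f Δ - scenVal X c f ω ≤ α} := fun α => by
    simpa only [sub_le_comm] using hg.measurableSet_sep_le hS (robustVal X c f Δ - α)
  rw [htail]
  exact ⟨(monotone_measure_sep_le _).monotoneOn _,
    (upperSemicontinuous_measure_sep_le _ hmeas).upperSemicontinuousOn _⟩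

/-- Under Assumptions 1–3, for every N ≥ d (d ≥ 1), the tail probability function p_N
is monotonically nondecreasing and upper semicontinuous at every α ∈ [0,∞). -/
theorem stmt_5 {d m : ℕ} (hd : 1 ≤ d)
    (X : Set (EuclideanSpace ℝ (Fin d))) (c : EuclideanSpace ℝ (Fin d))
    (Δ : Set (EuclideanSpace ℝ (Fin m))) (hΔne : Δ.Nonempty)
    (f : EuclideanSpace ℝ (Fin d) → EuclideanSpace ℝ (Fin m) → ℝ)
    -- Assumption 1
    (hlsc : LowerSemicontinuousOn (Function.uncurry f) (X ×ˢ Δ))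
    (hXcomp : IsCompact X)
    -- Assumption 2
    (hfeas : ∃ x ∈ X, ∀ δ ∈ Δ, f x δ ≤ 0)
    -- Assumption 3
    (hXconv : Convex ℝ X)
    (hconv : ∀ δ ∈ Δ, ConvexOn ℝ X fun x => f x δ)
    -- probability measure supported on Δ
    (ℙ : Measure (EuclideanSpace ℝ (Fin m))) [IsProbabilityMeasure ℙ]
    (hΔmeas : MeasurableSet Δ) (hΔone : ℙ Δ = 1)
    (N : ℕ) (hN : d ≤ N) :
    MonotoneOn (tailProb X c f Δ ℙ N) (Set.Ici 0) ∧
      UpperSemicontinuousOn (tailProb X c f Δ ℙ N) (Set.Ici 0) :=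
  stmt_5_general X c Δ f hlsc hXcomp hfeas ℙ hΔmeas N
end

section
/- Suppose Δ ⊆ ℝ^m is nonempty and bounded, f is lower semicontinuous on X × cl(Δ), Assumptions 2 and 3 hold (X compact convex, f(·,δ) convex on X, and the robust constraint is feasible), and there exists a constant L_g ≥ 0 such that |g_d(ω) − g_d(ω')| ≤ L_g · max_{1≤i≤d} ‖δ_i − δ'_i‖ for all ω = (δ_1,…,δ_d), ω' = (δ'_1,…,δ'_d) ∈ cl(Δ)^d. Then there exist points δ*_1,…,δ*_d ∈ cl(Δ) such that g_d(δ*_1,…,δ*_d) = J*. -/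
open MeasureTheory Set

/-!
Since `g_d` is monotone in the scenario set and, `f` being l.s.c. in `δ`, constraints indexed by
`cl Δ` are no stronger than those indexed by `Δ`, we get `g_d ≤ J*` on `cl(Δ)^d`. Conversely, if
`t < J*`, the compact sublevel set `{x ∈ X | c·x ≤ t}` misses the intersection of the closed
constraint sets `{x ∈ X | f(x,δ) ≤ 0}`, `δ ∈ Δ`, so finitely many of them already miss it. Helly's
theorem for these convex sets together with the convex sublevel set leaves a subfamily of at most
`d + 1` sets with empty intersection; as the constraint sets alone have the common point given by
Assumption 2, the sublevel set is among them, so at most `d` scenarios suffice. Hence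
`J* = sup g_d` over `Δ^d`, and the Lipschitz function `g_d` attains this value on the compact set
`cl(Δ)^d`.
-/

open Module
open scoped Finset

theorem LowerSemicontinuousOn.isClosed_inter_preimage_Iic {α γ : Type*} [TopologicalSpace α]
    [LinearOrder γ] {g : α → γ} {s : Set α} (hg : LowerSemicontinuousOn g s) (hs : IsClosed s)
    (c : γ) : IsClosed (s ∩ g ⁻¹' Iic c) := by
  obtain ⟨v, hv, hsv⟩ := lowerSemicontinuousOn_iff_preimage_Iic.1 hg c
  exact hsv ▸ hs.inter hv

theorem Convex.exists_card_le_finrank_inter_biInter_eq_empty {ι 𝕜 E : Type*} [Field 𝕜]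
    [LinearOrder 𝕜] [IsStrictOrderedRing 𝕜] [AddCommGroup E] [Module 𝕜 E] [FiniteDimensional 𝕜 E]
    {C : Set E} {K : ι → Set E} {s : Finset ι} (hC : Convex 𝕜 C) (hK : ∀ i ∈ s, Convex 𝕜 (K i))
    (hKs : (⋂ i ∈ s, K i).Nonempty) (h : C ∩ ⋂ i ∈ s, K i = ∅) :
    ∃ u ⊆ s, #u ≤ finrank 𝕜 E ∧ C ∩ ⋂ i ∈ u, K i = ∅ := by
  classical
  set G : Option ι → Set E := fun o => o.elim C K
  have hG : ∀ u : Finset ι, ⋂ o ∈ u.insertNone, G o = C ∩ ⋂ i ∈ u, K i := by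
    intro u; ext x; simp [G, Finset.mem_insertNone, Option.forall]
  obtain ⟨I, hIs, hI, hIempty⟩ :
      ∃ I ⊆ s.insertNone, #I ≤ finrank 𝕜 E + 1 ∧ ¬(⋂ o ∈ I, G o).Nonempty := by
    by_contra! hne
    refine (hG s ▸ Convex.helly_theorem' (fun o ho => ?_) hne).ne_empty h
    cases o with
    | none => exact hC
    | some i => exact hK i (Finset.mem_insertNone.1 ho i rfl)
  have hnone : none ∈ I := by
    by_contra hn
    refine hIempty (hKs.mono (Set.subset_iInter₂ fun o ho => ?_))
    cases o with
    | none => exact absurd ho hn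
    | some i => exact biInter_subset_of_mem (Finset.mem_insertNone.1 (hIs ho) i rfl)
  refine ⟨I.eraseNone, fun i hi => ?_, ?_, ?_⟩
  · exact Finset.mem_insertNone.1 (hIs (Finset.mem_eraseNone.1 hi)) i rfl
  · have := Finset.card_insertNone I.eraseNone
    rw [Finset.insertNone_eraseNone, Finset.insert_eq_of_mem hnone] at this
    omega
  · rw [← hG, Finset.insertNone_eraseNone, Finset.insert_eq_of_mem hnone]
    exact not_nonempty_iff_eq_empty.1 hIempty

theorem Finset.exists_fin_range_superset {α : Type*} {s : Finset α} {t : Set α} {n : ℕ}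
    (hst : ↑s ⊆ t) (ht : t.Nonempty) (hn : #s ≤ n) :
    ∃ ω : Fin n → α, (∀ i, ω i ∈ t) ∧ ↑s ⊆ Set.range ω := by
  obtain ⟨a, ha⟩ := ht
  refine ⟨fun i => if h : (i : ℕ) < #s then s.equivFin.symm ⟨i, h⟩ else a, fun i => ?_, ?_⟩
  · dsimp only
    split_ifs
    exacts [hst (Subtype.prop _), ha]
  · intro x hx
    refine ⟨Fin.castLE hn (s.equivFin ⟨x, hx⟩), ?_⟩
    simp

theorem lipschitzOnWith_of_abs_sub_le_mul_sup'_norm {ι α : Type*} [Fintype ι]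
    [SeminormedAddCommGroup α] {K : Set (ι → α)} {g : (ι → α) → ℝ} {L : ℝ}
    (hι : (Finset.univ : Finset ι).Nonempty)
    (hg : ∀ ω ∈ K, ∀ ω' ∈ K, |g ω - g ω'| ≤ L * Finset.univ.sup' hι fun i => ‖ω i - ω' i‖) :
    LipschitzOnWith L.toNNReal g K := by
  refine LipschitzOnWith.of_dist_le_mul fun ω hω ω' hω' => ?_
  have hsup : Finset.univ.sup' hι (fun i => ‖ω i - ω' i‖) ≤ dist ω ω' :=
    Finset.sup'_le _ _ fun i _ => (dist_eq_norm _ _).symm.trans_le (dist_le_pi_dist ω ω' i)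
  calc dist (g ω) (g ω') ≤ L * Finset.univ.sup' hι fun i => ‖ω i - ω' i‖ := hg ω hω ω' hω'
    _ ≤ L.toNNReal * dist ω ω' :=
      mul_le_mul (Real.le_coe_toNNReal L) hsup
        (Finset.le_sup'_of_le _ (Finset.mem_univ hι.choose) (norm_nonneg _)) (by positivity)

section Feasibility

variable {E P : Type*} (X : Set E) (f : E → P → ℝ)

def feasSet (T : Set P) : Set E := {x ∈ X | ∀ δ ∈ T, f x δ ≤ 0}

-- Junk value `0` when the feasible set is empty (`Real.sInf_empty`).
noncomputable def optVal (φ : E → ℝ) (T : Set P) : ℝ := sInf (φ '' feasSet X f T)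

variable {X f}

theorem feasSet_anti : Antitone (feasSet X f) :=
  fun _ _ hT _ hx => ⟨hx.1, fun δ hδ => hx.2 δ (hT hδ)⟩

theorem feasSet_range {N : ℕ} (ω : Fin N → P) :
    feasSet X f (range ω) = {x ∈ X | ∀ i, f x (ω i) ≤ 0} := by
  simp only [feasSet, forall_mem_range]

theorem feasSet_closure [TopologicalSpace P] {T : Set P}
    (hf : ∀ x ∈ X, LowerSemicontinuousOn (f x) (closure T)) :
    feasSet X f (closure T) = feasSet X f T := by
  refine (feasSet_anti subset_closure).antisymm fun x hx => ⟨hx.1, fun δ hδ => ?_⟩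
  have hclosed := (hf x hx.1).isClosed_inter_preimage_Iic isClosed_closure 0
  exact (closure_minimal (t := closure T ∩ f x ⁻¹' Iic 0)
    (fun δ hδ => ⟨subset_closure hδ, hx.2 δ hδ⟩) hclosed hδ).2

theorem exists_card_le_finrank_forall_feasSet_lt [AddCommGroup E] [Module ℝ E]
    [FiniteDimensional ℝ E] {φ : E → ℝ} (hφ : ConvexOn ℝ X φ) {F : Finset P}
    (hf : ∀ δ ∈ F, ConvexOn ℝ X fun x => f x δ) (hne : (feasSet X f F).Nonempty) {t : ℝ}
    (ht : ∀ x ∈ feasSet X f F, t < φ x) :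
    ∃ D ⊆ F, D.card ≤ finrank ℝ E ∧ ∀ x ∈ feasSet X f D, t < φ x := by
  have key : ∀ D : Finset P, {x ∈ X | φ x ≤ t} ∩ ⋂ δ ∈ D, {x ∈ X | f x δ ≤ 0} = ∅ ↔
      ∀ x ∈ feasSet X f D, t < φ x := by
    refine fun D => ⟨fun h x hx => ?_, fun h => eq_empty_of_forall_notMem fun x ⟨hxt, hxK⟩ => ?_⟩
    · by_contra! hxt
      exact eq_empty_iff_forall_notMem.1 h x
        ⟨⟨hx.1, hxt⟩, mem_iInter₂.2 fun δ hδ => ⟨hx.1, hx.2 δ hδ⟩⟩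
    · exact (h x ⟨hxt.1, fun δ hδ => (mem_iInter₂.1 hxK δ hδ).2⟩).not_ge hxt.2
  obtain ⟨D, hDF, hD, hDt⟩ := Convex.exists_card_le_finrank_inter_biInter_eq_empty
    (hφ.convex_le t) (fun δ hδ => (hf δ hδ).convex_le 0)
    (hne.mono fun x hx => mem_iInter₂.2 fun δ hδ => ⟨hx.1, hx.2 δ hδ⟩) ((key F).2 ht)
  exact ⟨D, hDF, hD, (key D).1 hDt⟩

variable [TopologicalSpace E]

theorem isCompact_feasSet [T2Space E] (hX : IsCompact X) {T : Set P}
    (hf : ∀ δ ∈ T, LowerSemicontinuousOn (fun x => f x δ) X) : IsCompact (feasSet X f T) := by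
  have hinter : feasSet X f T = X ∩ ⋂ δ ∈ T, X ∩ (fun x => f x δ) ⁻¹' Iic 0 := by
    ext x; simp +contextual [feasSet]
  rw [hinter]
  exact hX.inter_right (isClosed_biInter fun δ hδ =>
    (hf δ hδ).isClosed_inter_preimage_Iic hX.isClosed 0)

theorem optVal_mono {φ : E → ℝ} (hX : IsCompact X) (hφ : ContinuousOn φ X) {T T' : Set P}
    (hT : T ⊆ T') (hne : (feasSet X f T').Nonempty) : optVal X f φ T ≤ optVal X f φ T' :=
  csInf_le_csInf ((hX.image_of_continuousOn hφ).bddBelow.mono (image_mono fun _ hx => hx.1))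
    (hne.image φ) (image_mono (feasSet_anti hT))

theorem lt_optVal_iff [T2Space E] {φ : E → ℝ} (hX : IsCompact X) (hφ : ContinuousOn φ X)
    {T : Set P} (hf : ∀ δ ∈ T, LowerSemicontinuousOn (fun x => f x δ) X)
    (hne : (feasSet X f T).Nonempty) {t : ℝ} : t < optVal X f φ T ↔ ∀ x ∈ feasSet X f T, t < φ x := by
  have hK := (isCompact_feasSet hX hf).image_of_continuousOn (hφ.mono fun _ hx => hx.1)
  refine ⟨fun ht x hx => ht.trans_le (csInf_le hK.bddBelow ⟨x, hx, rfl⟩), fun h => ?_⟩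
  obtain ⟨x, hx, hxval⟩ := hK.sInf_mem (hne.image φ)
  rw [optVal, ← hxval]
  exact h x hx

theorem exists_finset_forall_feasSet_lt {φ : E → ℝ} (hX : IsCompact X) (hφ : ContinuousOn φ X)
    {T : Set P} (hf : ∀ δ ∈ T, LowerSemicontinuousOn (fun x => f x δ) X) {t : ℝ}
    (ht : ∀ x ∈ feasSet X f T, t < φ x) :
    ∃ F : Finset P, ↑F ⊆ T ∧ ∀ x ∈ feasSet X f F, t < φ x := by
  have hS := hφ.lowerSemicontinuousOn.isCompact_inter_preimage_Iic hX t
  have hempty : X ∩ φ ⁻¹' Iic t ∩ ⋂ δ ∈ T, (fun x => f x δ) ⁻¹' Iic 0 = ∅ := by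
    refine eq_empty_of_forall_notMem fun x hx => ?_
    simp only [mem_inter_iff, mem_iInter, mem_preimage, mem_Iic] at hx
    exact (ht x ⟨hx.1.1, hx.2⟩).not_ge hx.1.2
  obtain ⟨u, hu⟩ := (LowerSemicontinuousOn.inter_biInter_preimage_Iic_eq_empty_iff_exists_finset
    hS fun δ hδ => (hf δ hδ).mono inter_subset_left).1 hempty
  refine ⟨u.map (Function.Embedding.subtype _), by simp, fun x hx => ?_⟩
  by_contra! hxt
  obtain ⟨δ, hδu, hδ⟩ := hu x ⟨hx.1, hxt⟩
  exact hδ.not_ge (hx.2 δ (Finset.mem_coe.2 (Finset.mem_map_of_mem _ hδu)))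

theorem exists_fin_lt_optVal_range [T2Space E] [AddCommGroup E] [Module ℝ E] [FiniteDimensional ℝ E]
    {φ : E → ℝ} (hX : IsCompact X)
    (hφ : ContinuousOn φ X) (hφc : ConvexOn ℝ X φ) {Δ : Set P} (hΔ : Δ.Nonempty)
    (hf : ∀ δ ∈ Δ, LowerSemicontinuousOn (fun x => f x δ) X)
    (hfc : ∀ δ ∈ Δ, ConvexOn ℝ X fun x => f x δ) (hne : (feasSet X f Δ).Nonempty) {n : ℕ}
    (hn : finrank ℝ E ≤ n) {t : ℝ} (ht : t < optVal X f φ Δ) :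
    ∃ ω : Fin n → P, (∀ i, ω i ∈ Δ) ∧ t < optVal X f φ (range ω) := by
  obtain ⟨F, hFΔ, hF⟩ :=
    exists_finset_forall_feasSet_lt hX hφ hf ((lt_optVal_iff hX hφ hf hne).1 ht)
  obtain ⟨D, hDF, hD, hDt⟩ := exists_card_le_finrank_forall_feasSet_lt hφc
    (fun δ hδ => hfc δ (hFΔ hδ)) (hne.mono (feasSet_anti hFΔ)) hF
  obtain ⟨ω, hωΔ, hDω⟩ :=
    D.exists_fin_range_superset ((Finset.coe_subset.2 hDF).trans hFΔ) hΔ (hD.trans hn)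
  have hωΔ' : range ω ⊆ Δ := range_subset_iff.2 hωΔ
  refine ⟨ω, hωΔ, (lt_optVal_iff hX hφ (fun δ hδ => hf δ (hωΔ' hδ))
    (hne.mono (feasSet_anti hωΔ'))).2 fun x hx => hDt x (feasSet_anti hDω hx)⟩

end Feasibility

theorem scenVal_eq_optVal_range {d m N : ℕ} (X : Set (EuclideanSpace ℝ (Fin d)))
    (c : EuclideanSpace ℝ (Fin d)) (f : EuclideanSpace ℝ (Fin d) → EuclideanSpace ℝ (Fin m) → ℝ)
    (ω : Fin N → EuclideanSpace ℝ (Fin m)) :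
    scenVal X c f ω = optVal X f (fun x => ∑ i, c i * x i) (range ω) := by
  rw [optVal, feasSet_range]
  rfl

theorem stmt_7_general {d m : ℕ} (hd : 1 ≤ d)
    (X : Set (EuclideanSpace ℝ (Fin d))) (c : EuclideanSpace ℝ (Fin d))
    (Δ : Set (EuclideanSpace ℝ (Fin m))) (hΔne : Δ.Nonempty)
    (hΔbdd : Bornology.IsBounded Δ)
    (f : EuclideanSpace ℝ (Fin d) → EuclideanSpace ℝ (Fin m) → ℝ)
    (hlsc : LowerSemicontinuousOn (Function.uncurry f) (X ×ˢ closure Δ))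
    -- Assumption 2
    (hfeas : ∃ x ∈ X, ∀ δ ∈ Δ, f x δ ≤ 0)
    -- Assumption 3 (X compact convex, f(·,δ) convex)
    (hXcomp : IsCompact X) (hXconv : Convex ℝ X)
    (hconv : ∀ δ ∈ Δ, ConvexOn ℝ X fun x => f x δ)
    -- Lipschitz condition on g_d
    (Lg : ℝ)
    (hLip : ∀ ω ω' : Fin d → EuclideanSpace ℝ (Fin m),
      (∀ i, ω i ∈ closure Δ) → (∀ i, ω' i ∈ closure Δ) →
      |scenVal X c f ω - scenVal X c f ω'| ≤
        Lg * Finset.univ.sup' (Finset.univ_nonempty_iff.mpr ⟨⟨0, hd⟩⟩)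
          (fun i => ‖ω i - ω' i‖)) :
    ∃ ωstar : Fin d → EuclideanSpace ℝ (Fin m),
      (∀ i, ωstar i ∈ closure Δ) ∧ scenVal X c f ωstar = robustVal X c f Δ := by
  set φ : EuclideanSpace ℝ (Fin d) → ℝ := fun x => ∑ i, c i * x i with hφ_def
  have hφ_inner : φ = fun x => inner ℝ c x := by
    ext x; simp [hφ_def, PiLp.inner_apply, mul_comm]
  have hφc : ConvexOn ℝ X φ := hφ_inner ▸ (innerₛₗ ℝ c).convexOn hXconv
  have hφ : ContinuousOn φ X := (by fun_prop : Continuous φ).continuousOn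
  have hfX : ∀ δ ∈ closure Δ, LowerSemicontinuousOn (fun x => f x δ) X := fun δ hδ =>
    hlsc.comp (g := fun x => (x, δ)) (by fun_prop) fun x hx => ⟨hx, hδ⟩
  have hfΔ : ∀ x ∈ X, LowerSemicontinuousOn (f x) (closure Δ) := fun x hx =>
    hlsc.comp (g := fun δ => (x, δ)) (by fun_prop) fun δ hδ => ⟨hx, hδ⟩
  have hg : ContinuousOn (scenVal X c f) (univ.pi fun _ => closure Δ) :=
    (lipschitzOnWith_of_abs_sub_le_mul_sup'_norm (K := univ.pi fun _ => closure Δ) _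
      fun ω hω ω' hω' => hLip ω ω' (fun i => hω i trivial) fun i => hω' i trivial).continuousOn
  obtain ⟨ωs, hωs, hmax⟩ := (isCompact_univ_pi fun _ => hΔbdd.isCompact_closure).exists_isMaxOn
    (univ_pi_nonempty_iff.2 fun _ => hΔne.closure) hg
  have hωs' : ∀ i, ωs i ∈ closure Δ := fun i => hωs i trivial
  refine ⟨ωs, hωs', le_antisymm ?_ (le_of_forall_lt fun t ht => ?_)⟩
  · calc scenVal X c f ωs = optVal X f φ (range ωs) := scenVal_eq_optVal_range X c f ωs
      _ ≤ optVal X f φ (closure Δ) :=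
        optVal_mono hXcomp hφ (range_subset_iff.2 hωs') (feasSet_closure hfΔ ▸ hfeas)
      _ = robustVal X c f Δ := by rw [optVal, feasSet_closure hfΔ]; rfl
  · obtain ⟨ω, hωΔ, htω⟩ := exists_fin_lt_optVal_range hXcomp hφ hφc hΔne
      (fun δ hδ => hfX δ (subset_closure hδ)) hconv hfeas finrank_euclideanSpace_fin.le ht
    rw [← scenVal_eq_optVal_range] at htω
    exact htω.trans_le (hmax fun i _ => subset_closure (hωΔ i))

/-- If Δ is bounded, f is l.s.c. on X × cl(Δ), Assumptions 2–3 hold, and g_d is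
Lipschitz in the sense |g_d(ω) − g_d(ω')| ≤ L_g · max_i ‖δ_i − δ'_i‖ on cl(Δ)^d,
then there exist δ*_1,…,δ*_d ∈ cl(Δ) with g_d(δ*_1,…,δ*_d) = J*. -/
theorem stmt_7 {d m : ℕ} (hd : 1 ≤ d)
    (X : Set (EuclideanSpace ℝ (Fin d))) (c : EuclideanSpace ℝ (Fin d))
    (Δ : Set (EuclideanSpace ℝ (Fin m))) (hΔne : Δ.Nonempty)
    (hΔbdd : Bornology.IsBounded Δ)
    (f : EuclideanSpace ℝ (Fin d) → EuclideanSpace ℝ (Fin m) → ℝ)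
    (hlsc : LowerSemicontinuousOn (Function.uncurry f) (X ×ˢ closure Δ))
    -- Assumption 2
    (hfeas : ∃ x ∈ X, ∀ δ ∈ Δ, f x δ ≤ 0)
    -- Assumption 3 (X compact convex, f(·,δ) convex)
    (hXcomp : IsCompact X) (hXconv : Convex ℝ X)
    (hconv : ∀ δ ∈ Δ, ConvexOn ℝ X fun x => f x δ)
    -- Lipschitz condition on g_d
    (Lg : ℝ) (hLg : 0 ≤ Lg)
    (hLip : ∀ ω ω' : Fin d → EuclideanSpace ℝ (Fin m),
      (∀ i, ω i ∈ closure Δ) → (∀ i, ω' i ∈ closure Δ) →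
      |scenVal X c f ω - scenVal X c f ω'| ≤
        Lg * Finset.univ.sup' (Finset.univ_nonempty_iff.mpr ⟨⟨0, hd⟩⟩)
          (fun i => ‖ω i - ω' i‖)) :
    ∃ ωstar : Fin d → EuclideanSpace ℝ (Fin m),
      (∀ i, ωstar i ∈ closure Δ) ∧ scenVal X c f ωstar = robustVal X c f Δ :=
  stmt_7_general hd X c Δ hΔne hΔbdd f hlsc hfeas hXcomp hXconv hconv Lg hLip
end

section
/- Suppose Δ ⊆ ℝ^m is nonempty and bounded, f is lower semicontinuous on X × cl(Δ), Assumptions 2 and 3 hold, and there exists L_g ≥ 0 such that |g_d(ω) − g_d(ω')| ≤ L_g · max_{1≤i≤d} ‖δ_i − δ'_i‖ for all ω, ω' ∈ cl(Δ)^d. Let δ*_1,…,δ*_d ∈ cl(Δ) satisfy g_d(δ*_1,…,δ*_d) = J*. Then for every nonempty finite subset S ⊆ cl(Δ), inf { c·x : x ∈ X, f(x,δ) ≤ 0 for all δ ∈ S } ≥ J* − L_g · max_{1≤i≤d} min_{δ ∈ S} ‖δ*_i − δ‖. -/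
/-!
Choose for each `δ*_i` a nearest point `δ_i` of `S`. Every `x` feasible for `S` is feasible for
`(δ_1,…,δ_d)`, so the `S`-value is at least `g_d(δ_1,…,δ_d)`, which by the Lipschitz bound is at
least `g_d(δ*) - L_g · max_i ‖δ*_i - δ_i‖ = J* - L_g · max_i min_{δ ∈ S} ‖δ*_i - δ‖`. Lower
semicontinuity carries a robustly feasible point from `Δ` to `cl(Δ) ⊇ S`, so the `S`-problem is
feasible and its value is a genuine infimum rather than the junk value `sInf ∅ = 0`.
-/

open MeasureTheory Set

theorem LowerSemicontinuousOn.le_of_mem_closure {α γ : Type*} [TopologicalSpace α]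
    [LinearOrder γ] [TopologicalSpace γ] [ClosedIicTopology γ] {f : α → γ} {s : Set α}
    (hf : LowerSemicontinuousOn f (closure s)) {b : γ} (hs : ∀ x ∈ s, f x ≤ b) :
    ∀ x ∈ closure s, f x ≤ b := by
  obtain ⟨v, hv, hsv⟩ := lowerSemicontinuousOn_iff_preimage_Iic.mp hf b
  have hsub : closure s ⊆ v :=
    closure_minimal (fun x hx => (hsv.subset ⟨subset_closure hx, hs x hx⟩).2) hv
  exact fun x hx => (hsv.symm.subset ⟨hx, hsub hx⟩).2

theorem scenVal_le_sInf_of_forall_mem {d m N : ℕ} {X : Set (EuclideanSpace ℝ (Fin d))}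
    (hX : IsCompact X) (c : EuclideanSpace ℝ (Fin d))
    (f : EuclideanSpace ℝ (Fin d) → EuclideanSpace ℝ (Fin m) → ℝ)
    {S : Set (EuclideanSpace ℝ (Fin m))} (hfeas : ∃ x ∈ X, ∀ δ ∈ S, f x δ ≤ 0)
    {ω : Fin N → EuclideanSpace ℝ (Fin m)} (hω : ∀ i, ω i ∈ S) :
    scenVal X c f ω ≤ sInf ((fun x => ∑ i, c i * x i) '' {x ∈ X | ∀ δ ∈ S, f x δ ≤ 0}) := by
  have hcont : Continuous fun x : EuclideanSpace ℝ (Fin d) => ∑ i, c i * x i := by fun_prop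
  obtain ⟨x₀, hx₀⟩ := hfeas
  refine csInf_le_csInf ((hX.image hcont).bddBelow.mono (image_mono fun x hx => hx.1))
    ⟨_, mem_image_of_mem _ hx₀⟩ (image_mono ?_)
  exact fun x hx => ⟨hx.1, fun i => hx.2 _ (hω i)⟩

theorem stmt_8_general {d m : ℕ} (hd : 1 ≤ d)
    (X : Set (EuclideanSpace ℝ (Fin d))) (c : EuclideanSpace ℝ (Fin d))
    (Δ : Set (EuclideanSpace ℝ (Fin m)))
    (f : EuclideanSpace ℝ (Fin d) → EuclideanSpace ℝ (Fin m) → ℝ)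
    (hlsc : LowerSemicontinuousOn (Function.uncurry f) (X ×ˢ closure Δ))
    -- Assumption 2
    (hfeas : ∃ x ∈ X, ∀ δ ∈ Δ, f x δ ≤ 0)
    -- Assumption 3 (X compact convex, f(·,δ) convex)
    (hXcomp : IsCompact X)
    -- Lipschitz condition on g_d
    (Lg : ℝ)
    (hLip : ∀ ω ω' : Fin d → EuclideanSpace ℝ (Fin m),
      (∀ i, ω i ∈ closure Δ) → (∀ i, ω' i ∈ closure Δ) →
      |scenVal X c f ω - scenVal X c f ω'| ≤
        Lg * Finset.univ.sup' (Finset.univ_nonempty_iff.mpr ⟨⟨0, hd⟩⟩)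
          (fun i => ‖ω i - ω' i‖))
    -- a maximizer δ* of g_d
    (ωstar : Fin d → EuclideanSpace ℝ (Fin m)) (hωstar : ∀ i, ωstar i ∈ closure Δ)
    (hωstarJ : scenVal X c f ωstar = robustVal X c f Δ)
    -- a nonempty finite subset S of cl(Δ)
    (S : Finset (EuclideanSpace ℝ (Fin m))) (hSne : S.Nonempty)
    (hS : (S : Set (EuclideanSpace ℝ (Fin m))) ⊆ closure Δ) :
    robustVal X c f Δ -
        Lg * Finset.univ.sup' (Finset.univ_nonempty_iff.mpr ⟨⟨0, hd⟩⟩)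
          (fun i => S.inf' hSne fun δ => ‖ωstar i - δ‖) ≤
      sInf ((fun x => ∑ i, c i * x i) ''
        {x ∈ X | ∀ δ ∈ S, f x δ ≤ 0}) := by
  obtain ⟨x₀, hx₀X, hx₀⟩ := hfeas
  have hx₀cl : ∀ δ ∈ closure Δ, f x₀ δ ≤ 0 :=
    (hlsc.comp (continuous_const.prodMk continuous_id).continuousOn
      fun δ hδ => ⟨hx₀X, hδ⟩).le_of_mem_closure hx₀
  choose g hgS hg using fun i => S.exists_mem_eq_inf' hSne fun δ => ‖ωstar i - δ‖
  have hgJ := scenVal_le_sInf_of_forall_mem hXcomp c f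
    ⟨x₀, hx₀X, fun δ hδ => hx₀cl δ (hS hδ)⟩ hgS
  have hdist : Finset.univ.sup' (Finset.univ_nonempty_iff.mpr ⟨⟨0, hd⟩⟩)
      (fun i => ‖ωstar i - g i‖) =
      Finset.univ.sup' (Finset.univ_nonempty_iff.mpr ⟨⟨0, hd⟩⟩)
        (fun i => S.inf' hSne fun δ => ‖ωstar i - δ‖) :=
    Finset.sup'_congr _ rfl fun i _ => (hg i).symm
  have hgap := abs_le.mp (hLip ωstar g hωstar fun i => hS (hgS i))
  rw [hωstarJ, hdist] at hgap
  exact (sub_le_comm.mp hgap.2).trans hgJ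

/-- Under the hypotheses of Statement 7, if δ*_1,…,δ*_d ∈ cl(Δ) satisfy
g_d(δ*_1,…,δ*_d) = J*, then for every nonempty finite S ⊆ cl(Δ),
inf { c·x : x ∈ X, f(x,δ) ≤ 0 ∀ δ ∈ S } ≥ J* − L_g · max_i min_{δ ∈ S} ‖δ*_i − δ‖. -/
theorem stmt_8 {d m : ℕ} (hd : 1 ≤ d)
    (X : Set (EuclideanSpace ℝ (Fin d))) (c : EuclideanSpace ℝ (Fin d))
    (Δ : Set (EuclideanSpace ℝ (Fin m))) (hΔne : Δ.Nonempty)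
    (hΔbdd : Bornology.IsBounded Δ)
    (f : EuclideanSpace ℝ (Fin d) → EuclideanSpace ℝ (Fin m) → ℝ)
    (hlsc : LowerSemicontinuousOn (Function.uncurry f) (X ×ˢ closure Δ))
    -- Assumption 2
    (hfeas : ∃ x ∈ X, ∀ δ ∈ Δ, f x δ ≤ 0)
    -- Assumption 3 (X compact convex, f(·,δ) convex)
    (hXcomp : IsCompact X) (hXconv : Convex ℝ X)
    (hconv : ∀ δ ∈ Δ, ConvexOn ℝ X fun x => f x δ)
    -- Lipschitz condition on g_d
    (Lg : ℝ) (hLg : 0 ≤ Lg)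
    (hLip : ∀ ω ω' : Fin d → EuclideanSpace ℝ (Fin m),
      (∀ i, ω i ∈ closure Δ) → (∀ i, ω' i ∈ closure Δ) →
      |scenVal X c f ω - scenVal X c f ω'| ≤
        Lg * Finset.univ.sup' (Finset.univ_nonempty_iff.mpr ⟨⟨0, hd⟩⟩)
          (fun i => ‖ω i - ω' i‖))
    -- a maximizer δ* of g_d
    (ωstar : Fin d → EuclideanSpace ℝ (Fin m)) (hωstar : ∀ i, ωstar i ∈ closure Δ)
    (hωstarJ : scenVal X c f ωstar = robustVal X c f Δ)
    -- a nonempty finite subset S of cl(Δ)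
    (S : Finset (EuclideanSpace ℝ (Fin m))) (hSne : S.Nonempty)
    (hS : (S : Set (EuclideanSpace ℝ (Fin m))) ⊆ closure Δ) :
    robustVal X c f Δ -
        Lg * Finset.univ.sup' (Finset.univ_nonempty_iff.mpr ⟨⟨0, hd⟩⟩)
          (fun i => S.inf' hSne fun δ => ‖ωstar i - δ‖) ≤
      sInf ((fun x => ∑ i, c i * x i) ''
        {x ∈ X | ∀ δ ∈ S, f x δ ≤ 0}) :=
  stmt_8_general hd X c Δ f hlsc hfeas hXcomp Lg hLip ωstar hωstar hωstarJ S hSne hS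
end

section
/- For all integers k ≥ 1 and N ≥ 1 and every real ε with 0 ≤ ε ≤ 1/k, the inequality ∑_{i=1}^{k} (−1)^{i−1} ∑_{j=0}^{k−i} C(i−1+j, j) (1 − iε)^N ≤ k(1−ε)^N holds, where C(·,·) denotes the binomial coefficient. -/
open Finset

/-- For k, N ≥ 1 and 0 ≤ ε ≤ 1/k, the inclusion–exclusion bound
Φ(ε;k,N) = ∑_{i=1}^{k} (−1)^{i−1} ∑_{j=0}^{k−i} C(i−1+j, j) (1−iε)^N is at most the
union bound Φ_a(ε;k,N) = k(1−ε)^N.  (Here the outer sum is reindexed by i ↦ i+1.) -/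
theorem stmt_10 (k N : ℕ) (hk : 1 ≤ k) (hN : 1 ≤ N)
    (ε : ℝ) (hε0 : 0 ≤ ε) (hεk : ε ≤ 1 / (k : ℝ)) :
    ∑ i ∈ Finset.range k, (-1 : ℝ) ^ i *
        ∑ j ∈ Finset.range (k - i), ((i + j).choose j : ℝ) * (1 - ((i : ℝ) + 1) * ε) ^ N ≤
      (k : ℝ) * (1 - ε) ^ N := by
  classical
  have hk0 : (0:ℝ) < k := by exact_mod_cast hk
  have hkε : (k:ℝ) * ε ≤ 1 := by
    have := (le_div_iff₀ hk0).mp hεk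
    linarith [this]
  -- weights
  set w : Option (Fin k) → ℝ := fun x => Option.elim x (1 - (k:ℝ)*ε) (fun _ => ε) with hw
  have hw0 : ∀ x, 0 ≤ w x := by
    rintro (_|j)
    · simp only [hw, Option.elim_none]; linarith
    · simp only [hw, Option.elim_some]; exact hε0
  set W : (Fin N → Option (Fin k)) → ℝ := fun f => ∏ t, w (f t) with hWdef
  have hW0 : ∀ f, 0 ≤ W f := fun f => Finset.prod_nonneg (fun t _ => hw0 _)
  set M : (Fin N → Option (Fin k)) → Finset (Fin k) :=
    fun f => Finset.univ.filter (fun j => ∀ t, f t ≠ some j) with hM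
  -- key inclusion-exclusion building block
  have hT : ∀ T : Finset (Fin k),
      ∑ f : Fin N → Option (Fin k), (if T ⊆ M f then W f else 0)
        = (1 - (T.card : ℝ) * ε) ^ N := by
    intro T
    have hsum : ∑ x ∈ (univ : Finset (Option (Fin k))) \ T.image some, w x
        = 1 - (T.card:ℝ) * ε := by
      rw [Finset.sum_sdiff_eq_sub (subset_univ _)]
      have h1 : ∑ x : Option (Fin k), w x = 1 := by
        rw [Fintype.sum_option]
        simp only [hw, Option.elim]
        rw [Finset.sum_const, Finset.card_univ, Fintype.card_fin, nsmul_eq_mul]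
        ring
      have h2 : ∑ x ∈ T.image some, w x = (T.card:ℝ) * ε := by
        rw [Finset.sum_image (fun a _ b _ h => Option.some_injective _ h)]
        simp only [hw, Option.elim]
        rw [Finset.sum_const, nsmul_eq_mul]
      rw [h1, h2]
    have hpi : Fintype.piFinset (fun _ : Fin N => ((univ : Finset (Option (Fin k))) \ T.image some))
        = Finset.univ.filter (fun f => T ⊆ M f) := by
      ext f
      rw [Fintype.mem_piFinset, Finset.mem_filter]
      constructor
      · intro h
        refine ⟨mem_univ _, fun j hj => ?_⟩
        simp only [hM, mem_filter, mem_univ, true_and]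
        intro t hteq
        have h2 := h t
        rw [mem_sdiff] at h2
        exact h2.2 (by rw [hteq]; exact Finset.mem_image_of_mem some hj)
      · rintro ⟨-, h⟩ t
        rw [mem_sdiff]
        refine ⟨mem_univ _, fun hmem => ?_⟩
        obtain ⟨j, hj, hje⟩ := Finset.mem_image.mp hmem
        have h2 := h hj
        simp only [hM, mem_filter, mem_univ, true_and] at h2
        exact h2 t hje.symm
    calc ∑ f : Fin N → Option (Fin k), (if T ⊆ M f then W f else 0)
        = ∑ f ∈ Finset.univ.filter (fun f => T ⊆ M f), W f := (Finset.sum_filter _ _).symm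
      _ = ∑ f ∈ Fintype.piFinset (fun _ : Fin N =>
            ((univ : Finset (Option (Fin k))) \ T.image some)), ∏ t, w (f t) := by rw [hpi]
      _ = (∑ x ∈ (univ : Finset (Option (Fin k))) \ T.image some, w x) ^ N :=
          (Finset.sum_pow' _ _ _).symm
      _ = (1 - (T.card : ℝ) * ε) ^ N := by rw [hsum]
  -- total mass is 1
  have htotal : ∑ f : Fin N → Option (Fin k), W f = 1 := by
    have := hT ∅
    simpa using this
  -- union bound side
  have hunion : (k : ℝ) * (1 - ε) ^ N
      = ∑ f : Fin N → Option (Fin k), ((M f).card : ℝ) * W f := by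
    have hj : ∀ j : Fin k, ∑ f : Fin N → Option (Fin k), (if j ∈ M f then W f else 0)
        = (1 - ε) ^ N := by
      intro j
      have := hT {j}
      simpa [Finset.singleton_subset_iff] using this
    calc (k : ℝ) * (1 - ε) ^ N
        = ∑ _j : Fin k, (1 - ε) ^ N := by
          rw [Finset.sum_const, Finset.card_univ, Fintype.card_fin, nsmul_eq_mul]
      _ = ∑ j : Fin k, ∑ f : Fin N → Option (Fin k), (if j ∈ M f then W f else 0) := by
          exact Finset.sum_congr rfl fun j _ => (hj j).symm
      _ = ∑ f : Fin N → Option (Fin k), ∑ j : Fin k, (if j ∈ M f then W f else 0) :=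
          Finset.sum_comm
      _ = ∑ f : Fin N → Option (Fin k), ((M f).card : ℝ) * W f := by
          refine Finset.sum_congr rfl fun f _ => ?_
          rw [Finset.sum_ite_mem, Finset.univ_inter, Finset.sum_const, nsmul_eq_mul]
  -- alternating sum over subsets
  have hpowℝ : ∀ (s : Finset (Fin k)), ∑ T ∈ s.powerset, (-1:ℝ)^T.card
      = if s = ∅ then 1 else 0 := by
    intro s
    have h := @Finset.sum_powerset_neg_one_pow_card (Fin k) _ s
    have := congrArg (Int.cast : ℤ → ℝ) h
    push_cast at this
    rw [this]
  have hS' : ∑ i ∈ Finset.range (k+1), (-1:ℝ)^i * (k.choose i : ℝ) * (1 - (i:ℝ)*ε)^N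
      = ∑ f : Fin N → Option (Fin k), (if M f = ∅ then W f else 0) := by
    have hgroup := Finset.sum_powerset_apply_card
      (fun m => (-1:ℝ)^m * (1 - (m:ℝ)*ε)^N) (x := (univ : Finset (Fin k)))
    rw [Finset.card_univ, Fintype.card_fin] at hgroup
    calc ∑ i ∈ Finset.range (k+1), (-1:ℝ)^i * (k.choose i : ℝ) * (1 - (i:ℝ)*ε)^N
        = ∑ i ∈ Finset.range (k+1), (k.choose i) • ((-1:ℝ)^i * (1 - (i:ℝ)*ε)^N) := by
          refine Finset.sum_congr rfl fun i _ => ?_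
          rw [nsmul_eq_mul]
          ring
      _ = ∑ T ∈ (univ : Finset (Fin k)).powerset, (-1:ℝ)^T.card * (1 - (T.card:ℝ)*ε)^N :=
          hgroup.symm
      _ = ∑ T ∈ (univ : Finset (Fin k)).powerset,
            (-1:ℝ)^T.card * ∑ f : Fin N → Option (Fin k), (if T ⊆ M f then W f else 0) := by
          exact Finset.sum_congr rfl fun T _ => by rw [hT T]
      _ = ∑ f : Fin N → Option (Fin k), ∑ T ∈ (univ : Finset (Fin k)).powerset,
            (-1:ℝ)^T.card * (if T ⊆ M f then W f else 0) := by
          simp_rw [Finset.mul_sum]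
          exact Finset.sum_comm
      _ = ∑ f : Fin N → Option (Fin k), (if M f = ∅ then W f else 0) := by
          refine Finset.sum_congr rfl fun f _ => ?_
          have : ∀ T ∈ (univ : Finset (Fin k)).powerset,
              (-1:ℝ)^T.card * (if T ⊆ M f then W f else 0)
              = if T ∈ (M f).powerset then (-1:ℝ)^T.card * W f else 0 := by
            intro T _
            by_cases h : T ⊆ M f <;> simp [Finset.mem_powerset, h]
          rw [Finset.sum_congr rfl this, ← Finset.sum_filter]
          have hfilter : (univ : Finset (Fin k)).powerset.filter (· ∈ (M f).powerset)
              = (M f).powerset := by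
            ext T
            simp [Finset.mem_powerset]
          rw [hfilter, ← Finset.sum_mul, hpowℝ]
          split <;> simp
  -- reduce the statement's LHS
  have hnat : ∀ i, i < k → ∑ j ∈ Finset.range (k - i), (i + j).choose j = k.choose (i+1) := by
    intro i hi
    obtain ⟨m, hm⟩ : ∃ m, k - i = m + 1 := ⟨k - i - 1, by omega⟩
    rw [hm]
    calc ∑ j ∈ Finset.range (m+1), (i + j).choose j
        = ∑ j ∈ Finset.range (m+1), (j + i).choose i := by
          refine Finset.sum_congr rfl fun j _ => ?_
          rw [Nat.add_comm i j, Nat.choose_symm_add]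
      _ = (m + i + 1).choose (i + 1) := Nat.sum_range_add_choose m i
      _ = k.choose (i+1) := by congr 1; omega
  have hLHS : ∑ i ∈ Finset.range k, (-1 : ℝ) ^ i *
        ∑ j ∈ Finset.range (k - i), ((i + j).choose j : ℝ) * (1 - ((i : ℝ) + 1) * ε) ^ N
      = 1 - ∑ i ∈ Finset.range (k+1), (-1:ℝ)^i * (k.choose i : ℝ) * (1 - (i:ℝ)*ε)^N := by
    have hterm : ∀ i ∈ Finset.range k, (-1 : ℝ) ^ i *
        ∑ j ∈ Finset.range (k - i), ((i + j).choose j : ℝ) * (1 - ((i : ℝ) + 1) * ε) ^ N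
        = -((-1:ℝ)^(i+1) * (k.choose (i+1) : ℝ) * (1 - ((i+1:ℕ):ℝ)*ε)^N) := by
      intro i hi
      rw [← Finset.sum_mul]
      have : ∑ j ∈ Finset.range (k - i), ((i + j).choose j : ℝ)
          = (k.choose (i+1) : ℝ) := by
        rw [← Nat.cast_sum, hnat i (Finset.mem_range.mp hi)]
      rw [this]
      push_cast
      ring
    rw [Finset.sum_congr rfl hterm, Finset.sum_range_succ']
    rw [Finset.sum_neg_distrib]
    norm_num
  rw [hLHS, hS', hunion]
  have : ∑ f : Fin N → Option (Fin k), W f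
      ≤ ∑ f : Fin N → Option (Fin k),
          ((if M f = ∅ then W f else 0) + ((M f).card : ℝ) * W f) := by
    refine Finset.sum_le_sum fun f _ => ?_
    by_cases h : M f = ∅
    · simp [h]
    · have hcard : 1 ≤ ((M f).card : ℝ) := by
        have : 0 < (M f).card := Finset.card_pos.mpr (Finset.nonempty_iff_ne_empty.mpr h)
        exact_mod_cast this
      have := hW0 f
      simp only [h, if_neg, if_false]
      nlinarith
  rw [Finset.sum_add_distrib] at this
  rw [htotal] at this
  linarith
end

section
/- Suppose X ⊆ ℝ^d is nonempty, compact and convex, f is lower semicontinuous on X × cl(Δ) and x ↦ f(x,δ) is convex on X for every δ ∈ cl(Δ), Slater's condition holds (there exists x_0 ∈ X with s := sup_{δ ∈ cl(Δ)} f(x_0,δ) < 0), and for every x ∈ X the map δ ↦ f(x,δ) is Lipschitz on cl(Δ) with constant L_δ. Define L_SP := ((min_{x ∈ X} c·x) − c·x_0)/s ≥ 0. Then for every N ≥ 1 and all ω = (δ_1,…,δ_N), ω' = (δ'_1,…,δ'_N) ∈ cl(Δ)^N, |g_N(ω) − g_N(ω')| ≤ L_SP · L_δ · max_{1≤i≤N}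 ‖δ_i − δ'_i‖. -/
/-!
Pulling a point `x` that violates the constraints by at most `r` towards the Slater point `x₀`
along the segment, with weight `λ = r / (r - s)`, yields a feasible point, because the constraints
are convex and `(1 - λ) r + λ s = 0`. Since `c · x₀ - c · x ≤ c · x₀ - min_X c · x = -L_SP s` and
`λ ≤ r / (-s)`, the objective grows by at most `L_SP r`. Lipschitz continuity in `δ` turns
scenarios at distance `ρ` into constraint violations of at most `r = L_δ ρ`.
-/

open MeasureTheory Set

theorem mul_le_mul_of_le_of_mul_nonneg {L a b : ℝ} (ha : 0 ≤ a) (hab : a ≤ b) (hLb : 0 ≤ L * b) :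
    L * a ≤ L * b := by
  rcases le_or_gt 0 L with hL | hL
  · exact mul_le_mul_of_nonneg_left hab hL
  · have hb : b = 0 := le_antisymm (nonpos_of_mul_nonneg_right hLb hL) (ha.trans hab)
    obtain rfl : a = 0 := le_antisymm (hab.trans hb.le) ha
    simp [hb]

section Slater

variable {E ι : Type*} [AddCommGroup E] [Module ℝ E] {X : Set E} {g : E → ℝ} {h h' : ι → E → ℝ}
  {x₀ x : E} {J s r : ℝ}

theorem ConvexOn.exists_feasible_of_slater (hg : ConvexOn ℝ X g)
    (hh : ∀ i, ConvexOn ℝ X (h i)) (hx₀ : x₀ ∈ X) (hx : x ∈ X) (hs : s < 0) (hr : 0 ≤ r)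
    (hx₀s : ∀ i, h i x₀ ≤ s) (hxr : ∀ i, h i x ≤ r) :
    ∃ y ∈ X, (∀ i, h i y ≤ 0) ∧ g y ≤ g x + r / (r - s) * (g x₀ - g x) := by
  set t := r / (r - s)
  have hrs : 0 < r - s := by linarith
  have ht₀ : 0 ≤ t := div_nonneg hr hrs.le
  have ht₁ : 0 ≤ 1 - t := by rw [sub_nonneg, div_le_one hrs]; linarith
  have ht : t * (r - s) = r := div_mul_cancel₀ r hrs.ne'
  refine ⟨(1 - t) • x + t • x₀, hg.1 hx hx₀ ht₁ ht₀ (by ring), fun i => ?_, ?_⟩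
  · calc h i ((1 - t) • x + t • x₀) ≤ (1 - t) * h i x + t * h i x₀ :=
          (hh i).2 hx hx₀ ht₁ ht₀ (by ring)
      _ ≤ (1 - t) * r + t * s := by gcongr; exacts [hxr i, hx₀s i]
      _ = 0 := by linear_combination -ht
  · calc g ((1 - t) • x + t • x₀) ≤ (1 - t) * g x + t * g x₀ := hg.2 hx hx₀ ht₁ ht₀ (by ring)
      _ = g x + t * (g x₀ - g x) := by ring

theorem ConvexOn.sInf_image_feasible_le_of_slater (hg : ConvexOn ℝ X g)
    (hJ : ∀ x ∈ X, J ≤ g x) (hh : ∀ i, ConvexOn ℝ X (h i)) (hx₀ : x₀ ∈ X) (hs : s < 0)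
    (hx₀s : ∀ i, h i x₀ ≤ s) (hx₀' : ∀ i, h' i x₀ ≤ 0) (hr : 0 ≤ r)
    (hshift : ∀ x ∈ X, ∀ i, h i x ≤ h' i x + r) :
    sInf (g '' {x ∈ X | ∀ i, h i x ≤ 0}) ≤
      sInf (g '' {x ∈ X | ∀ i, h' i x ≤ 0}) + (J - g x₀) / s * r := by
  rw [← sub_le_iff_le_add]
  refine le_csInf ⟨g x₀, x₀, ⟨hx₀, hx₀'⟩, rfl⟩ ?_
  rintro _ ⟨x, ⟨hx, hxh'⟩, rfl⟩
  obtain ⟨y, hy, hyh, hgy⟩ := hg.exists_feasible_of_slater hh hx₀ hx hs hr hx₀s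
    fun i => (hshift x hx i).trans (by linarith [hxh' i])
  have hbdd : BddBelow (g '' {x ∈ X | ∀ i, h i x ≤ 0}) :=
    ⟨J, forall_mem_image.2 fun x hx => hJ x hx.1⟩
  have hgrowth : r / (r - s) * (g x₀ - g x) ≤ (J - g x₀) / s * r :=
    calc r / (r - s) * (g x₀ - g x) ≤ r / (r - s) * (g x₀ - J) := by
          gcongr
          · exact div_nonneg hr (by linarith)
          · exact hJ x hx
      _ ≤ r / -s * (g x₀ - J) := by
          gcongr <;> linarith [hJ x₀ hx₀]
      _ = (J - g x₀) / s * r := by field_simp; ring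
  linarith [csInf_le hbdd ⟨y, ⟨hy, hyh⟩, rfl⟩]

end Slater

theorem Real.le_sSup_of_ne_zero {S : Set ℝ} (hS : sSup S ≠ 0) {a : ℝ} (ha : a ∈ S) :
    a ≤ sSup S :=
  le_csSup (not_not.1 fun hunb => hS (Real.sSup_of_not_bddAbove hunb)) ha

section Scenario

variable {d m N : ℕ} {X : Set (EuclideanSpace ℝ (Fin d))} {c x₀ : EuclideanSpace ℝ (Fin d)}

theorem EuclideanSpace.sum_mul_eq_inner (c : EuclideanSpace ℝ (Fin d)) :
    (fun x : EuclideanSpace ℝ (Fin d) => ∑ i, c i * x i) = innerSL ℝ c := by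
  ext x
  simp [PiLp.inner_apply, mul_comm]

theorem IsCompact.sInf_sum_mul_le (hX : IsCompact X) (c : EuclideanSpace ℝ (Fin d))
    {x : EuclideanSpace ℝ (Fin d)} (hx : x ∈ X) :
    sInf ((fun x => ∑ i, c i * x i) '' X) ≤ ∑ i, c i * x i := by
  have hcont : Continuous fun x : EuclideanSpace ℝ (Fin d) => ∑ i, c i * x i := by
    rw [EuclideanSpace.sum_mul_eq_inner]
    exact (innerSL ℝ c).continuous
  exact csInf_le (hX.image hcont).bddBelow ⟨x, hx, rfl⟩

theorem scenVal_le_add_of_slater {D : Set (EuclideanSpace ℝ (Fin m))}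
    {f : EuclideanSpace ℝ (Fin d) → EuclideanSpace ℝ (Fin m) → ℝ} {s L ρ : ℝ}
    (hXcomp : IsCompact X) (hXconv : Convex ℝ X) (hconv : ∀ δ ∈ D, ConvexOn ℝ X fun x => f x δ)
    (hx₀ : x₀ ∈ X) (hs : s < 0) (hx₀s : ∀ δ ∈ D, f x₀ δ ≤ s)
    (hfLip : ∀ x ∈ X, ∀ δ ∈ D, ∀ δ' ∈ D, |f x δ - f x δ'| ≤ L * ‖δ - δ'‖) (hr : 0 ≤ L * ρ)
    {ω ω' : Fin N → EuclideanSpace ℝ (Fin m)} (hω : ∀ i, ω i ∈ D) (hω' : ∀ i, ω' i ∈ D)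
    (hρ : ∀ i, ‖ω i - ω' i‖ ≤ ρ) :
    scenVal X c f ω ≤ scenVal X c f ω' +
      (sInf ((fun x => ∑ i, c i * x i) '' X) - ∑ i, c i * x₀ i) / s * (L * ρ) := by
  have hobj : ConvexOn ℝ X fun x => ∑ i, c i * x i := by
    rw [EuclideanSpace.sum_mul_eq_inner]
    exact (innerSL ℝ c).toLinearMap.convexOn hXconv
  refine hobj.sInf_image_feasible_le_of_slater (fun x => hXcomp.sInf_sum_mul_le c)
    (fun i => hconv _ (hω i)) hx₀ hs (fun i => hx₀s _ (hω i))
    (fun i => (hx₀s _ (hω' i)).trans hs.le) hr fun x hx i => ?_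
  have hlip := (le_abs_self _).trans (hfLip x hx _ (hω i) _ (hω' i))
  have hmono := mul_le_mul_of_le_of_mul_nonneg (norm_nonneg _) (hρ i) hr
  linarith

end Scenario

theorem stmt_13_general {d m : ℕ}
    (X : Set (EuclideanSpace ℝ (Fin d)))
    (hXcomp : IsCompact X) (hXconv : Convex ℝ X)
    (c : EuclideanSpace ℝ (Fin d))
    (Δ : Set (EuclideanSpace ℝ (Fin m)))
    (f : EuclideanSpace ℝ (Fin d) → EuclideanSpace ℝ (Fin m) → ℝ)
    (hconv : ∀ δ ∈ closure Δ, ConvexOn ℝ X fun x => f x δ)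
    -- Slater's condition
    (x₀ : EuclideanSpace ℝ (Fin d)) (hx₀ : x₀ ∈ X)
    (s : ℝ) (hs : s = sSup ((f x₀) '' closure Δ)) (hsneg : s < 0)
    -- Lipschitz continuity of f in δ
    (Lδ : ℝ)
    (hfLip : ∀ x ∈ X, ∀ δ ∈ closure Δ, ∀ δ' ∈ closure Δ,
      |f x δ - f x δ'| ≤ Lδ * ‖δ - δ'‖)
    -- L_SP
    (LSP : ℝ)
    (hLSP : LSP = (sInf ((fun x => ∑ i, c i * x i) '' X) - ∑ i, c i * x₀ i) / s)
    (N : ℕ) (hN : 1 ≤ N)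
    (ω ω' : Fin N → EuclideanSpace ℝ (Fin m))
    (hω : ∀ i, ω i ∈ closure Δ) (hω' : ∀ i, ω' i ∈ closure Δ) :
    0 ≤ LSP ∧
      |scenVal X c f ω - scenVal X c f ω'| ≤
        LSP * Lδ * Finset.univ.sup' (Finset.univ_nonempty_iff.mpr ⟨⟨0, hN⟩⟩)
          (fun i => ‖ω i - ω' i‖) := by
  have hx₀s : ∀ δ ∈ closure Δ, f x₀ δ ≤ s := fun δ hδ =>
    hs ▸ Real.le_sSup_of_ne_zero (hs ▸ hsneg.ne) (mem_image_of_mem _ hδ)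
  refine ⟨hLSP ▸ div_nonneg_of_nonpos (sub_nonpos.2 (hXcomp.sInf_sum_mul_le c hx₀)) hsneg.le, ?_⟩
  obtain ⟨j, -, hρj⟩ := Finset.exists_mem_eq_sup' (Finset.univ_nonempty_iff.mpr ⟨⟨0, hN⟩⟩)
    fun i => ‖ω i - ω' i‖
  set ρ := Finset.univ.sup' _ fun i => ‖ω i - ω' i‖
  have hρ : ∀ i, ‖ω i - ω' i‖ ≤ ρ := fun i =>
    Finset.le_sup' (fun i => ‖ω i - ω' i‖) (Finset.mem_univ i)
  have hρ' : ∀ i, ‖ω' i - ω i‖ ≤ ρ := fun i => by rw [norm_sub_rev]; exact hρ i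
  have hr : 0 ≤ Lδ * ρ := by
    rw [hρj]
    exact (abs_nonneg _).trans (hfLip x₀ hx₀ _ (hω j) _ (hω' j))
  rw [hLSP, mul_assoc, abs_sub_le_iff, sub_le_iff_le_add', sub_le_iff_le_add']
  exact ⟨scenVal_le_add_of_slater hXcomp hXconv hconv hx₀ hsneg hx₀s hfLip hr hω hω' hρ,
    scenVal_le_add_of_slater hXcomp hXconv hconv hx₀ hsneg hx₀s hfLip hr hω' hω hρ'⟩

/-- Under Slater's condition and Lipschitz continuity of f in δ, the scenario value
function g_N is Lipschitz: |g_N(ω) − g_N(ω')| ≤ L_SP·L_δ·max_i ‖δ_i − δ'_i‖ on cl(Δ)^N,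
where L_SP = ((min_{x∈X} c·x) − c·x₀)/s and s = sup_{δ ∈ cl(Δ)} f(x₀,δ) < 0. -/
theorem stmt_13 {d m : ℕ}
    (X : Set (EuclideanSpace ℝ (Fin d))) (hXne : X.Nonempty)
    (hXcomp : IsCompact X) (hXconv : Convex ℝ X)
    (c : EuclideanSpace ℝ (Fin d))
    (Δ : Set (EuclideanSpace ℝ (Fin m))) (hΔne : Δ.Nonempty)
    (f : EuclideanSpace ℝ (Fin d) → EuclideanSpace ℝ (Fin m) → ℝ)
    (hlsc : LowerSemicontinuousOn (Function.uncurry f) (X ×ˢ closure Δ))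
    (hconv : ∀ δ ∈ closure Δ, ConvexOn ℝ X fun x => f x δ)
    -- Slater's condition
    (x₀ : EuclideanSpace ℝ (Fin d)) (hx₀ : x₀ ∈ X)
    (s : ℝ) (hs : s = sSup ((f x₀) '' closure Δ)) (hsneg : s < 0)
    -- Lipschitz continuity of f in δ
    (Lδ : ℝ)
    (hfLip : ∀ x ∈ X, ∀ δ ∈ closure Δ, ∀ δ' ∈ closure Δ,
      |f x δ - f x δ'| ≤ Lδ * ‖δ - δ'‖)
    -- L_SP
    (LSP : ℝ)
    (hLSP : LSP = (sInf ((fun x => ∑ i, c i * x i) '' X) - ∑ i, c i * x₀ i) / s)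
    (N : ℕ) (hN : 1 ≤ N)
    (ω ω' : Fin N → EuclideanSpace ℝ (Fin m))
    (hω : ∀ i, ω i ∈ closure Δ) (hω' : ∀ i, ω' i ∈ closure Δ) :
    0 ≤ LSP ∧
      |scenVal X c f ω - scenVal X c f ω'| ≤
        LSP * Lδ * Finset.univ.sup' (Finset.univ_nonempty_iff.mpr ⟨⟨0, hN⟩⟩)
          (fun i => ‖ω i - ω' i‖) :=
  stmt_13_general X hXcomp hXconv c Δ f hconv x₀ hx₀ s hs hsneg Lδ hfLip LSP hLSP N hN ω ω' hω hω'
end
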